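/- Let f : {1,…,k}^n → ℝ ∪ {+∞} be a function and let f̃ : S_k^n → ℝ ∪ {+∞} be a k-submodular relaxation of f, i.e., f̃ is k-submodular and f̃(x) = f(x) for all x ∈ {1,…,k}^n ⊆ S_k^n. Then for every minimizer x ∈ S_k^n of f̃ there exists a minimizer y ∈ {1,…,k}^n of f such that for every index i with x_i ≠ 0 one has y_i = x_i. -/

import Mathlib

/-- The partial order on `S_k = {0,1,…,k}`: `a ⪯ b` iff `a = 0` or `a = b`. -/
def pre {k : ℕ} (a b : Fin (k + 1)) : Prop := a = 0 ∨ a = b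

instance {k : ℕ} (a b : Fin (k + 1)) : Decidable (pre a b) :=
  decidable_of_iff (a = 0 ∨ a = b) Iff.rfl

/-- The componentwise order `⪯` on `S_k^n`. -/
def preV {k n : ℕ} (x y : Fin n → Fin (k + 1)) : Prop := ∀ i, pre (x i) (y i)

/-- The operation `⊓` on `S_k^n`. -/
def sqcap {k n : ℕ} (x y : Fin n → Fin (k + 1)) : Fin n → Fin (k + 1) :=
  fun i => if pre (x i) (y i) ∨ pre (y i) (x i) then min (x i) (y i) else 0

/-- The operation `⊔` on `S_k^n`. -/
def sqcup {k n : ℕ} (x y : Fin n → Fin (k + 1)) : Fin n → Fin (k + 1) :=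
  fun i => if pre (x i) (y i) ∨ pre (y i) (x i) then max (x i) (y i) else 0

/-- A `(⊓,⊔)`-closed subset of `S_k^n`. -/
def closedSet {k n : ℕ} (M : Set (Fin n → Fin (k + 1))) : Prop :=
  M.Nonempty ∧ ∀ x ∈ M, ∀ y ∈ M, sqcap x y ∈ M ∧ sqcup x y ∈ M

/-!
Let `x` minimize the `k`-submodular `f̃`. For every `w`, submodularity together with
`f̃ x ≤ f̃ (x ⊓ w)` gives `f̃ (x ⊔ w) ≤ f̃ w`. Applying this twice to a minimizer `z` of `f`
shows that `x ⊔ (x ⊔ z)`, which agrees with `x` on the support of `x` and with `z` elsewhere,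
is a point of `{1,…,k}^n` no worse than `z`.
-/

lemma sqcup_sqcup_apply {k n : ℕ} (x z : Fin n → Fin (k + 1)) (hz : ∀ i, z i ≠ 0) (i : Fin n) :
    sqcup x (sqcup x z) i = if x i = 0 then z i else x i := by
  unfold sqcup pre
  by_cases h0 : x i = 0
  · simp [h0]
  by_cases hxz : x i = z i
  · simp [hxz]
  -- `x i` and `z i` are distinct and nonzero, hence incomparable: `(x ⊔ z) i = 0`
  simp [h0, hxz, Ne.symm hxz, hz i]

lemma apply_sqcup_le_of_forall_le {k n : ℕ} {g : (Fin n → Fin (k + 1)) → WithTop ℝ}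
    (hsub : ∀ x y, g (sqcap x y) + g (sqcup x y) ≤ g x + g y)
    {x : Fin n → Fin (k + 1)} (hx : ∀ y, g x ≤ g y) (w : Fin n → Fin (k + 1)) :
    g (sqcup x w) ≤ g w := by
  by_cases htop : g x = ⊤
  · simp [top_le_iff.mp (htop ▸ hx w)]
  · rw [← WithTop.add_le_add_iff_left htop]
    exact (add_le_add_left (hx (sqcap x w)) _).trans (hsub x w)

theorem persistency_general (k n : ℕ) (hk : 0 < k)
    (f ftilde : (Fin n → Fin (k + 1)) → WithTop ℝ)
    (hsub : ∀ x y, ftilde (sqcap x y) + ftilde (sqcup x y) ≤ ftilde x + ftilde y)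
    (hrelax : ∀ x : Fin n → Fin (k + 1), (∀ i, x i ≠ 0) → ftilde x = f x)
    (x : Fin n → Fin (k + 1)) (hx : ∀ y, ftilde x ≤ ftilde y) :
    ∃ y : Fin n → Fin (k + 1), (∀ i, y i ≠ 0) ∧
      (∀ z, (∀ i, z i ≠ 0) → f y ≤ f z) ∧
      (∀ i, x i ≠ 0 → y i = x i) := by
  have hone : (fun _ => 1 : Fin n → Fin (k + 1)) ∈ {z | ∀ i, z i ≠ 0} := fun _ =>
    Fin.ext_iff.not.mpr (by simp [Nat.mod_eq_of_lt (Nat.succ_lt_succ hk)])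
  obtain ⟨z, hz, hzmin⟩ := Set.exists_min_image _ f (Set.toFinite _) ⟨_, hone⟩
  set y := sqcup x (sqcup x z)
  have hy : ∀ i, y i = if x i = 0 then z i else x i := sqcup_sqcup_apply x z hz
  have hyne : ∀ i, y i ≠ 0 := fun i => by
    rw [hy]; split_ifs with h
    exacts [hz i, h]
  refine ⟨y, hyne, fun w hw => ?_, fun i hi => by rw [hy, if_neg hi]⟩
  calc f y = ftilde y := (hrelax y hyne).symm
    _ ≤ ftilde z := ((apply_sqcup_le_of_forall_le hsub hx _).trans
        (apply_sqcup_le_of_forall_le hsub hx z))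
    _ = f z := hrelax z hz
    _ ≤ f w := hzmin w hw

/-- Persistency: if `f̃` is a `k`-submodular relaxation of `f` (agreeing with `f`
on points with all coordinates nonzero), then every minimizer `x` of `f̃` can be
extended to a minimizer `y` of `f` over `{1,…,k}^n` with `y i = x i` whenever
`x i ≠ 0`. -/
theorem persistency (k n : ℕ) (hk : 0 < k) (hn : 0 < n)
    (f ftilde : (Fin n → Fin (k + 1)) → WithTop ℝ)
    (hsub : ∀ x y, ftilde (sqcap x y) + ftilde (sqcup x y) ≤ ftilde x + ftilde y)
    (hrelax : ∀ x : Fin n → Fin (k + 1), (∀ i, x i ≠ 0) → ftilde x = f x)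
    (x : Fin n → Fin (k + 1)) (hx : ∀ y, ftilde x ≤ ftilde y) :
    ∃ y : Fin n → Fin (k + 1), (∀ i, y i ≠ 0) ∧
      (∀ z, (∀ i, z i ≠ 0) → f y ≤ f z) ∧
      (∀ i, x i ≠ 0 → y i = x i) :=
  persistency_general k n hk f ftilde hsub hrelax x hx
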